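/- arXiv:1711.08603 — 2 statements merged into one kernel-verified Lean document; each statement's English description precedes it below -/
import Mathlib

section
/- Assume H1, H2 and that b := lim_{z→∞} q'(z)·∫_z^∞ dx/q(x) exists in ℝ. Then b ≥ 0 and lim_{z→∞} (∫_z^∞ q(x)^{-1} dx)/(q(z)² ∫_z^∞ q(x)^{-3} dx) = 2b + 1. -/
/-! With `M z = ∫_z^∞ 1/q` and `N z = ∫_z^∞ 1/q³` the quotient is `(M / q²) / N`, and
`(M / q²)' / N' = 1 + 2 q' M` exactly, so L'Hôpital's rule gives the limit `2b + 1` as soon as `M`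
is finite. Finiteness comes from H1: as `(1/q)' = -q'/q²` is eventually small, `q` at most doubles
on `[y, y + 1/(2 q y)]`, and since `γ' = 2q` this gives `e^{γ y} ∫_y^∞ e^{-γ} ≥ e^{-2} / (2 q y)`.
Finally `b ≥ 0` because `q → ∞` forces `q' > 0` at arbitrarily large points, where `q' M ≥ 0`. -/

open MeasureTheory Real Filter Set Topology

theorem hasDerivAt_integral_Ioi {E : Type*} [NormedAddCommGroup E] [NormedSpace ℝ E]
    [CompleteSpace E] {f : ℝ → E} {a z : ℝ} (hf : IntegrableOn f (Ioi a)) (hz : a < z)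
    (hcont : ContinuousAt f z) :
    HasDerivAt (fun w => ∫ x in Ioi w, f x) (-f z) z := by
  have hint : IntervalIntegrable f volume a z :=
    (intervalIntegrable_iff_integrableOn_Ioc_of_le hz.le).2 (hf.mono_set Ioc_subset_Ioi_self)
  have h := (hasDerivAt_const z (∫ x in Ioi a, f x)).sub
    (intervalIntegral.integral_hasDerivAt_right hint
      ⟨Ioi a, Ioi_mem_nhds hz, hf.aestronglyMeasurable⟩ hcont)
  rw [zero_sub] at h
  refine h.congr_of_eventuallyEq ?_
  filter_upwards [Ioi_mem_nhds hz] with w hw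
  exact eq_sub_of_add_eq'
    (intervalIntegral.integral_interval_add_Ioi hf (hf.mono_set (Ioi_subset_Ioi hw.le)))

theorem MeasureTheory.IntegrableOn.pow_of_abs_le_one {f : ℝ → ℝ} {s : Set ℝ} (hf : IntegrableOn f s)
    (hs : MeasurableSet s) (h1 : ∀ x ∈ s, |f x| ≤ 1) {n : ℕ} (hn : n ≠ 0) :
    IntegrableOn (fun x => f x ^ n) s := by
  refine hf.norm.mono' (hf.aestronglyMeasurable.pow n) ?_
  filter_upwards [ae_restrict_mem hs] with x hx
  rw [norm_pow, Real.norm_eq_abs]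
  exact pow_le_of_le_one (abs_nonneg _) (h1 x hx) hn

theorem frequently_deriv_pos_of_tendsto_atTop {f : ℝ → ℝ} (hf : Differentiable ℝ f)
    (htop : Tendsto f atTop atTop) : ∃ᶠ x in atTop, 0 < deriv f x := by
  rw [frequently_atTop]
  intro c
  by_contra! hnonpos
  have hanti : AntitoneOn f (Ici c) :=
    antitoneOn_of_deriv_nonpos (convex_Ici c) hf.continuous.continuousOn hf.differentiableOn
      fun x hx => hnonpos x (interior_subset hx)
  obtain ⟨x, hcx, hfx⟩ := ((eventually_ge_atTop c).and (htop.eventually_gt_atTop (f c))).exists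
  exact (hanti self_mem_Ici hcx hcx).not_gt hfx

theorem le_two_mul_of_abs_deriv_div_sq_le_one {q : ℝ → ℝ} {a u v : ℝ}
    (hq : Differentiable ℝ q) (hpos : ∀ x ∈ Ici a, 0 < q x)
    (hq' : ∀ x ∈ Ici a, |deriv q x / q x ^ 2| ≤ 1)
    (hu : a ≤ u) (huv : u ≤ v) (hv : v ≤ u + 1 / (2 * q u)) : q v ≤ 2 * q u := by
  have hqu := hpos u hu
  have hqv := hpos v (hu.trans huv)
  have hlip : ‖(q v)⁻¹ - (q u)⁻¹‖ ≤ 1 * ‖v - u‖ :=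
    (convex_Ici a).norm_image_sub_le_of_norm_hasDerivWithin_le
      (fun x hx => ((hq x).hasDerivAt.inv (hpos x hx).ne').hasDerivWithinAt)
      (fun x hx => by rw [neg_div, norm_neg, Real.norm_eq_abs]; exact hq' x hx) hu (hu.trans huv)
  rw [Real.norm_eq_abs, Real.norm_eq_abs, one_mul, abs_of_nonneg (sub_nonneg.2 huv)] at hlip
  have hinv : (2 * q u)⁻¹ ≤ (q v)⁻¹ := by
    have := (abs_le.1 hlip).1
    rw [one_div, mul_inv] at hv
    rw [mul_inv]
    linarith
  rwa [inv_le_inv₀ (by positivity) hqv] at hinv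

theorem ofReal_exp_mul_le_lintegral_Ioi_exp_neg {q γ : ℝ → ℝ} (hq : Continuous q)
    (hγ : ∀ y, γ y = 2 * ∫ t in (0:ℝ)..y, q t) {y δ K : ℝ} (hK : 0 ≤ K)
    (hle : ∀ z ∈ Icc y (y + δ), q z ≤ K) :
    ENNReal.ofReal (exp (-γ y - 2 * K * δ) * δ) ≤ ∫⁻ z in Ioi y, ENNReal.ofReal (exp (-γ z)) := by
  have hγz : ∀ z ∈ Ioc y (y + δ), -γ y - 2 * K * δ ≤ -γ z := by
    intro z hz
    have hdiff : γ z - γ y = 2 * ∫ t in y..z, q t := by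
      rw [hγ, hγ, ← mul_sub, intervalIntegral.integral_interval_sub_left
        (hq.intervalIntegrable _ _) (hq.intervalIntegrable _ _)]
    have hint : ∫ t in y..z, q t ≤ ∫ t in y..z, K :=
      intervalIntegral.integral_mono_on hz.1.le (hq.intervalIntegrable _ _)
        intervalIntegrable_const fun t ht => hle t ⟨ht.1, ht.2.trans hz.2⟩
    rw [intervalIntegral.integral_const, smul_eq_mul] at hint
    nlinarith [hz.1, hz.2]
  calc ENNReal.ofReal (exp (-γ y - 2 * K * δ) * δ)
      = ∫⁻ _ in Ioc y (y + δ), ENNReal.ofReal (exp (-γ y - 2 * K * δ)) := by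
        rw [setLIntegral_const, volume_Ioc, add_sub_cancel_left,
          ENNReal.ofReal_mul (exp_pos _).le]
    _ ≤ ∫⁻ z in Ioc y (y + δ), ENNReal.ofReal (exp (-γ z)) :=
        setLIntegral_mono' measurableSet_Ioc fun z hz =>
          ENNReal.ofReal_le_ofReal (exp_le_exp.2 (hγz z hz))
    _ ≤ ∫⁻ z in Ioi y, ENNReal.ofReal (exp (-γ z)) := lintegral_mono_set Ioc_subset_Ioi_self

theorem integrableOn_one_div_of_lintegral_exp_lt_top {q γ : ℝ → ℝ} {a : ℝ}
    (hq : Differentiable ℝ q) (hγ : ∀ y, γ y = 2 * ∫ t in (0:ℝ)..y, q t)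
    (H1 : ∫⁻ y in Ioi (0:ℝ),
        ENNReal.ofReal (exp (γ y)) * ∫⁻ z in Ioi y, ENNReal.ofReal (exp (-(γ z))) < ⊤)
    (ha : 0 ≤ a) (hpos : ∀ x ∈ Ici a, 0 < q x)
    (hq' : ∀ x ∈ Ici a, |deriv q x / q x ^ 2| ≤ 1) :
    IntegrableOn (fun x => 1 / q x) (Ioi a) := by
  set c := ENNReal.ofReal (exp (-2) / 2)
  have hpt : ∀ y ∈ Ioi a, c * ENNReal.ofReal (1 / q y) ≤
      ENNReal.ofReal (exp (γ y)) * ∫⁻ z in Ioi y, ENNReal.ofReal (exp (-(γ z))) := by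
    intro y hy
    have hqy := hpos y (mem_Ici_of_Ioi hy)
    have hlower := ofReal_exp_mul_le_lintegral_Ioi_exp_neg hq.continuous hγ
      (δ := 1 / (2 * q y)) (K := 2 * q y) (by positivity)
      fun z hz => le_two_mul_of_abs_deriv_div_sq_le_one hq hpos hq' hy.le hz.1 hz.2
    calc c * ENNReal.ofReal (1 / q y)
        = ENNReal.ofReal (exp (γ y)) *
            ENNReal.ofReal (exp (-γ y - 2 * (2 * q y) * (1 / (2 * q y))) * (1 / (2 * q y))) := by
          rw [← ENNReal.ofReal_mul (by positivity), ← ENNReal.ofReal_mul (exp_pos _).le]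
          congr 1
          rw [show -γ y - 2 * (2 * q y) * (1 / (2 * q y)) = -γ y + -2 by field_simp; ring,
            exp_add, exp_neg (γ y)]
          field_simp
      _ ≤ _ := by gcongr
  have hfin : c * ∫⁻ y in Ioi a, ENNReal.ofReal (1 / q y) < ⊤ :=
    calc c * ∫⁻ y in Ioi a, ENNReal.ofReal (1 / q y)
        = ∫⁻ y in Ioi a, c * ENNReal.ofReal (1 / q y) :=
          (lintegral_const_mul' _ _ ENNReal.ofReal_ne_top).symm
      _ ≤ ∫⁻ y in Ioi a,
            ENNReal.ofReal (exp (γ y)) * ∫⁻ z in Ioi y, ENNReal.ofReal (exp (-(γ z))) :=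
          setLIntegral_mono' measurableSet_Ioi hpt
      _ ≤ ∫⁻ y in Ioi (0:ℝ),
            ENNReal.ofReal (exp (γ y)) * ∫⁻ z in Ioi y, ENNReal.ofReal (exp (-(γ z))) :=
          lintegral_mono_set (Ioi_subset_Ioi ha)
      _ < ⊤ := H1
  have hnonneg : 0 ≤ᵐ[volume.restrict (Ioi a)] fun x => 1 / q x := by
    filter_upwards [ae_restrict_mem measurableSet_Ioi] with x hx
    exact (one_div_pos.2 (hpos x (mem_Ici_of_Ioi hx))).le
  exact ⟨(measurable_const.div hq.continuous.measurable).aestronglyMeasurable,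
    (hasFiniteIntegral_iff_ofReal hnonneg).2
      (ENNReal.lt_top_of_mul_ne_top_right hfin.ne (by positivity))⟩

theorem nonneg_of_tendsto_deriv_mul_integral_Ioi_inv {q : ℝ → ℝ} {b : ℝ}
    (hq : Differentiable ℝ q) (htop : Tendsto q atTop atTop)
    (hb : Tendsto (fun z => deriv q z * ∫ x in Ioi z, 1 / q x) atTop (𝓝 b)) : 0 ≤ b := by
  refine ge_of_tendsto_of_frequently hb ?_
  have hpos : ∀ᶠ z in atTop, ∀ x ∈ Ioi z, 0 < q x := by
    obtain ⟨c, hc⟩ := eventually_atTop.1 (htop.eventually_gt_atTop 0)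
    filter_upwards [eventually_ge_atTop c] with z hz x hx using hc x (hz.trans hx.le)
  refine ((frequently_deriv_pos_of_tendsto_atTop hq htop).and_eventually hpos).mono ?_
  rintro z ⟨hderiv, hqpos⟩
  exact mul_nonneg hderiv.le
    (setIntegral_nonneg measurableSet_Ioi fun x hx => (one_div_pos.2 (hqpos x hx)).le)

theorem tendsto_integral_Ioi_inv_div_sq_mul_integral_Ioi_inv_pow_three {q : ℝ → ℝ} {a b : ℝ}
    (hq : Differentiable ℝ q) (htop : Tendsto q atTop atTop)
    (hM : IntegrableOn (fun x => 1 / q x) (Ioi a))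
    (hN : IntegrableOn (fun x => 1 / q x ^ 3) (Ioi a))
    (hb : Tendsto (fun z => deriv q z * ∫ x in Ioi z, 1 / q x) atTop (𝓝 b)) :
    Tendsto (fun z => (∫ x in Ioi z, 1 / q x) / (q z ^ 2 * ∫ x in Ioi z, 1 / q x ^ 3))
      atTop (𝓝 (2 * b + 1)) := by
  set M := fun z => ∫ x in Ioi z, 1 / q x
  set N := fun z => ∫ x in Ioi z, 1 / q x ^ 3
  have hlarge : ∀ᶠ z in atTop, a < z ∧ q z ≠ 0 :=
    (eventually_gt_atTop a).and ((htop.eventually_gt_atTop 0).mono fun z hz => hz.ne')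
  have hMd : ∀ᶠ z in atTop, HasDerivAt M (-(1 / q z)) z := by
    filter_upwards [hlarge] with z ⟨haz, hqz⟩
    exact hasDerivAt_integral_Ioi hM haz (continuousAt_const.div hq.continuous.continuousAt hqz)
  have hNd : ∀ᶠ z in atTop, HasDerivAt N (-(1 / q z ^ 3)) z := by
    filter_upwards [hlarge] with z ⟨haz, hqz⟩
    exact hasDerivAt_integral_Ioi hN haz
      (continuousAt_const.div (hq.continuous.continuousAt.pow 3) (pow_ne_zero 3 hqz))
  have hfd : ∀ᶠ z in atTop,
      HasDerivAt (fun z => M z / q z ^ 2) (-(1 + 2 * (deriv q z * M z)) / q z ^ 3) z := by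
    filter_upwards [hMd, hlarge] with z hMz ⟨_, hqz⟩
    refine (hMz.fun_div ((hq z).hasDerivAt.fun_pow 2) (pow_ne_zero 2 hqz)).congr_deriv ?_
    field_simp
    ring
  have hratio := HasDerivAt.lhopital_zero_atTop hfd hNd
    (by filter_upwards [hlarge] with z ⟨_, hqz⟩; simp [hqz])
    ((tendsto_integral_Ioi_zero tendsto_id).div_atTop
      ((tendsto_pow_atTop two_ne_zero).comp htop))
    (tendsto_integral_Ioi_zero tendsto_id)
    (by
      refine ((hb.const_mul 2).const_add 1).congr' ?_
      filter_upwards [hlarge] with z ⟨_, hqz⟩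
      field_simp
      rfl)
  rw [add_comm]
  simpa only [div_div] using hratio

/-- Under H1, H2 and b = lim q'(z)·∫_z^∞ dx/q(x) ∈ ℝ, one has b ≥ 0 and
(∫_z^∞ q⁻¹)/(q(z)² ∫_z^∞ q⁻³) → 2b + 1. -/
theorem sigma_eq_two_b_add_one
    (q γ : ℝ → ℝ) (b : ℝ)
    (hq : ContDiff ℝ 1 q)
    (hγ : ∀ y, γ y = 2 * ∫ t in (0:ℝ)..y, q t)
    (H1 : ∫⁻ y in Set.Ioi (0:ℝ),
        ENNReal.ofReal (Real.exp (γ y)) *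
          ∫⁻ z in Set.Ioi y, ENNReal.ofReal (Real.exp (-(γ z))) < ⊤)
    (H2a : Tendsto q atTop atTop)
    (H2b : Tendsto (fun x => deriv q x / q x ^ 2) atTop (nhds 0))
    (hb : Tendsto (fun z => deriv q z * ∫ x in Set.Ioi z, 1 / q x)
        atTop (nhds b)) :
    0 ≤ b ∧
      Tendsto
        (fun z =>
          (∫ x in Set.Ioi z, 1 / q x) /
            (q z ^ 2 * ∫ x in Set.Ioi z, 1 / q x ^ 3))
        atTop (nhds (2 * b + 1)) := by
  have hqd : Differentiable ℝ q := hq.differentiable one_ne_zero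
  have hsmall : ∀ᶠ x in atTop, |deriv q x / q x ^ 2| ≤ 1 := by
    simpa using H2b.abs.eventually_le_const (by simp : |(0:ℝ)| < 1)
  obtain ⟨a, ha⟩ := eventually_atTop.1
    ((eventually_ge_atTop 0).and ((H2a.eventually_ge_atTop 1).and hsmall))
  have hM : IntegrableOn (fun x => 1 / q x) (Ioi a) :=
    integrableOn_one_div_of_lintegral_exp_lt_top hqd hγ H1 (ha a le_rfl).1
      (fun x hx => one_pos.trans_le (ha x hx).2.1) fun x hx => (ha x hx).2.2
  have hN : IntegrableOn (fun x => 1 / q x ^ 3) (Ioi a) := by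
    simpa only [one_div_pow] using hM.pow_of_abs_le_one measurableSet_Ioi
      (fun x hx => by
        have hqx : 1 ≤ q x := (ha x (mem_Ici_of_Ioi hx)).2.1
        rw [abs_of_pos (by positivity), div_le_one (by positivity)]
        exact hqx)
      three_ne_zero
  exact ⟨nonneg_of_tendsto_deriv_mul_integral_Ioi_inv hqd H2a hb,
    tendsto_integral_Ioi_inv_div_sq_mul_integral_Ioi_inv_pow_three hqd H2a hM hN hb⟩
end

section
/- Let q be C¹ with q(x) → ∞ and limsup_{x→∞} |q'(x)|/q(x) < ∞, and assume H1. Then m'(x) = -2e^{γ(x)}∫_x^∞ e^{-γ(ξ)}dξ satisfies m'(x) = -1/q(x) + e^{γ(x)}∫_x^∞ (q'(ξ)/q(ξ)²) e^{-γ(ξ)} dξ for x large, and there exists a constant G > 0 such that |m''(x)|/|m'(x)| ≤ G for all x ≥ 0. -/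
open MeasureTheory Real Filter Set Asymptotics Topology

/-! With `f = exp (-γ)` we have `f' = -2 q f`, so `(h f)' = -(2 q h - h') f` for every `h`, and
integrating over `(x, ∞)` gives `∫ₓ^∞ (2 q h - h') f = h(x) f(x)`. For `h = 1/q` this is the
identity. For `h = 1/q²`, once `|q'| ≤ C q ≤ q² / 2`, the integrand dominates `f / q`, whence
`|∫ₓ^∞ (q'/q²) f| ≤ C f(x) / q(x)²`. Since `m'' = 2 q m' + 2 = 2 q e^γ ∫ₓ^∞ (q'/q²) f` and,
by the identity, `|m'| ≥ 1 / (2q)`, the ratio `|m''| / |m'|` is at most `4C` for large `x`;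
on the remaining compact interval it is bounded by continuity. -/

theorem hasDerivAt_integral_Ioi_s10 {f : ℝ → ℝ} (hf : Continuous f)
    (hint : ∀ a, IntegrableOn f (Ioi a)) (x : ℝ) :
    HasDerivAt (fun y => ∫ t in Ioi y, f t) (-f x) x := by
  have hF : (fun y => ∫ t in Ioi y, f t) = fun y => (∫ t in Ioi 0, f t) - ∫ t in 0..y, f t := by
    funext y
    rw [← intervalIntegral.integral_Ioi_sub_Ioi' (hint 0) (hint y), sub_sub_cancel]
  rw [hF]
  simpa using (intervalIntegral.integral_hasDerivAt_right (hf.intervalIntegrable 0 x)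
    (hf.stronglyMeasurableAtFilter _ _) hf.continuousAt).const_sub (∫ t in Ioi 0, f t)

theorem exists_pos_forall_ge_abs_le_mul_abs {u v : ℝ → ℝ} (hu : Continuous u)
    (hv : Continuous v) (hv0 : ∀ x, v x ≠ 0) {K : ℝ} (h : ∀ᶠ x in atTop, |u x| ≤ K * |v x|)
    (a : ℝ) : ∃ G > 0, ∀ x ≥ a, |u x| ≤ G * |v x| := by
  obtain ⟨b, hb⟩ := eventually_atTop.1 h
  obtain ⟨B, hB⟩ := (isCompact_Icc (a := a) (b := b)).exists_bound_of_continuousOn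
    ((hu.abs.div hv.abs fun x => abs_ne_zero.2 (hv0 x)).continuousOn)
  refine ⟨max (max B K) 1, by positivity, fun x hx => ?_⟩
  rcases le_total x b with hxb | hbx
  · have hratio : |u x| / |v x| ≤ B := (le_abs_self _).trans (hB x ⟨hx, hxb⟩)
    rw [div_le_iff₀ (abs_pos.2 (hv0 x))] at hratio
    exact hratio.trans (by gcongr; exact (le_max_left _ _).trans (le_max_left _ _))
  · exact (hb x hbx).trans (by gcongr; exact (le_max_right _ _).trans (le_max_left _ _))

variable {q γ : ℝ → ℝ}

theorem two_mul_mul_sub_le_sub (hγ : ∀ y, HasDerivAt γ (2 * q y) y) {a c : ℝ}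
    (hc : ∀ ξ ≥ a, c ≤ q ξ) {ξ : ℝ} (hξ : a ≤ ξ) : 2 * c * (ξ - a) ≤ γ ξ - γ a :=
  (convex_Ici a).mul_sub_le_image_sub_of_le_deriv
    (fun y _ => (hγ y).continuousAt.continuousWithinAt)
    (fun y _ => (hγ y).differentiableAt.differentiableWithinAt)
    (fun y hy => by rw [(hγ y).deriv]; linarith [hc y (interior_subset hy)])
    a self_mem_Ici ξ hξ hξ

theorem exp_neg_isBigO_exp_neg_mul (hγ : ∀ y, HasDerivAt γ (2 * q y) y) {c : ℝ}
    (hc : ∀ᶠ ξ in atTop, c ≤ q ξ) :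
    (fun ξ => exp (-γ ξ)) =O[atTop] fun ξ => exp (-(2 * c) * ξ) := by
  obtain ⟨a, ha⟩ := eventually_atTop.1 hc
  refine IsBigO.of_bound (exp (2 * c * a - γ a)) ?_
  filter_upwards [eventually_ge_atTop a] with ξ hξ
  rw [norm_of_nonneg (exp_pos _).le, norm_of_nonneg (exp_pos _).le, ← exp_add]
  exact exp_le_exp.2 (by linarith [two_mul_mul_sub_le_sub hγ ha hξ])

theorem integrableOn_exp_neg (hγ : ∀ y, HasDerivAt γ (2 * q y) y)
    (hqtop : Tendsto q atTop atTop) (a : ℝ) : IntegrableOn (fun ξ => exp (-γ ξ)) (Ioi a) :=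
  integrable_of_isBigO_exp_neg two_pos
    (continuous_iff_continuousAt.2 fun y => (hγ y).continuousAt.fun_neg.rexp).continuousOn
    (by simpa using exp_neg_isBigO_exp_neg_mul hγ (hqtop.eventually_ge_atTop 1))

theorem tendsto_exp_neg (hγ : ∀ y, HasDerivAt γ (2 * q y) y)
    (hqtop : Tendsto q atTop atTop) : Tendsto (fun ξ => exp (-γ ξ)) atTop (𝓝 0) :=
  (exp_neg_isBigO_exp_neg_mul hγ (hqtop.eventually_ge_atTop 1)).trans_tendsto <|
    tendsto_exp_atBot.comp (tendsto_id.const_mul_atTop_of_neg (by norm_num))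

theorem hasDerivAt_neg_two_mul_exp_mul_integral_Ioi (hγ : ∀ y, HasDerivAt γ (2 * q y) y)
    (hqtop : Tendsto q atTop atTop) (x : ℝ) :
    HasDerivAt (fun y => -2 * exp (γ y) * ∫ ξ in Ioi y, exp (-γ ξ))
      (2 * q x * (-2 * exp (γ x) * ∫ ξ in Ioi x, exp (-γ ξ)) + 2) x := by
  have hF := hasDerivAt_integral_Ioi_s10
    (continuous_iff_continuousAt.2 fun y => (hγ y).continuousAt.fun_neg.rexp)
    (integrableOn_exp_neg hγ hqtop) x
  refine ((((hγ x).exp).const_mul (-2)).mul hF).congr_deriv ?_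
  rw [exp_neg]
  field_simp

theorem hasDerivAt_neg_mul_exp_neg (hγ : ∀ y, HasDerivAt γ (2 * q y) y) {h : ℝ → ℝ} {h' ξ : ℝ}
    (hh : HasDerivAt h h' ξ) :
    HasDerivAt (fun t => -(h t * exp (-γ t))) ((2 * q ξ * h ξ - h') * exp (-γ ξ)) ξ :=
  (hh.mul (hγ ξ).fun_neg.exp).fun_neg.congr_deriv (by ring)

theorem integrableOn_Ioi_mul_exp_neg_of_nonneg (hγ : ∀ y, HasDerivAt γ (2 * q y) y)
    {h h' : ℝ → ℝ} {x : ℝ} (hh : ∀ ξ ∈ Ici x, HasDerivAt h (h' ξ) ξ)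
    (hnonneg : ∀ ξ ∈ Ioi x, 0 ≤ 2 * q ξ * h ξ - h' ξ)
    (hlim : Tendsto (fun ξ => h ξ * exp (-γ ξ)) atTop (𝓝 0)) :
    IntegrableOn (fun ξ => (2 * q ξ * h ξ - h' ξ) * exp (-γ ξ)) (Ioi x) :=
  integrableOn_Ioi_deriv_of_nonneg' (fun ξ hξ => hasDerivAt_neg_mul_exp_neg hγ (hh ξ hξ))
    (fun ξ hξ => mul_nonneg (hnonneg ξ hξ) (exp_pos _).le) (by simpa using hlim.neg)

theorem integral_Ioi_mul_exp_neg_of_nonneg (hγ : ∀ y, HasDerivAt γ (2 * q y) y)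
    {h h' : ℝ → ℝ} {x : ℝ} (hh : ∀ ξ ∈ Ici x, HasDerivAt h (h' ξ) ξ)
    (hnonneg : ∀ ξ ∈ Ioi x, 0 ≤ 2 * q ξ * h ξ - h' ξ)
    (hlim : Tendsto (fun ξ => h ξ * exp (-γ ξ)) atTop (𝓝 0)) :
    ∫ ξ in Ioi x, (2 * q ξ * h ξ - h' ξ) * exp (-γ ξ) = h x * exp (-γ x) := by
  rw [integral_Ioi_of_hasDerivAt_of_nonneg' (fun ξ hξ => hasDerivAt_neg_mul_exp_neg hγ (hh ξ hξ))
    (fun ξ hξ => mul_nonneg (hnonneg ξ hξ) (exp_pos _).le) (by simpa using hlim.neg)]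
  ring

theorem integral_Ioi_exp_neg_pos (hγ : ∀ y, HasDerivAt γ (2 * q y) y)
    (hqtop : Tendsto q atTop atTop) (x : ℝ) : 0 < ∫ ξ in Ioi x, exp (-γ ξ) :=
  haveI : NeZero (volume.restrict (Ioi x)) := ⟨by simp⟩
  integral_exp_pos (integrableOn_exp_neg hγ hqtop x)

theorem exists_pos_eventually_two_mul_le_and_abs_deriv_le (hqtop : Tendsto q atTop atTop)
    (hq' : ∃ C : ℝ, ∀ᶠ x in atTop, |deriv q x| / q x ≤ C) :
    ∃ C > 0, ∀ᶠ ξ in atTop, 2 * C ≤ q ξ ∧ |deriv q ξ| ≤ C * q ξ := by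
  obtain ⟨C₀, hC₀⟩ := hq'
  refine ⟨max C₀ 1, by positivity, ?_⟩
  filter_upwards [hC₀, hqtop.eventually_ge_atTop (2 * max C₀ 1)] with ξ hξ hqξ
  have hpos : 0 < q ξ := by linarith [le_max_right C₀ 1]
  rw [div_le_iff₀ hpos] at hξ
  exact ⟨hqξ, hξ.trans (by gcongr; exact le_max_left C₀ 1)⟩

section Regime

variable {C x : ℝ}

theorem abs_deriv_div_pow_le (hq' : ∀ ξ ≥ x, |deriv q ξ| ≤ C * q ξ) (hqpos : ∀ ξ ≥ x, 0 < q ξ)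
    (n : ℕ) {ξ : ℝ} (hξ : x ≤ ξ) : |deriv q ξ / q ξ ^ (n + 2)| ≤ C / q ξ ^ (n + 1) := by
  have hq := hqpos ξ hξ
  rw [abs_div, abs_of_pos (pow_pos hq _), div_le_div_iff₀ (by positivity) (by positivity)]
  calc |deriv q ξ| * q ξ ^ (n + 1) ≤ C * q ξ * q ξ ^ (n + 1) := by gcongr; exact hq' ξ hξ
    _ = C * q ξ ^ (n + 2) := by ring

theorem integral_Ioi_deriv_div_sq_mul_exp_neg (hqd : Differentiable ℝ q)
    (hγ : ∀ y, HasDerivAt γ (2 * q y) y) (hqtop : Tendsto q atTop atTop)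
    (hq : ∀ ξ ≥ x, 2 * C ≤ q ξ) (hq' : ∀ ξ ≥ x, |deriv q ξ| ≤ C * q ξ) (hC : 0 < C) :
    ∫ ξ in Ioi x, deriv q ξ / q ξ ^ 2 * exp (-γ ξ) =
      exp (-γ x) / q x - 2 * ∫ ξ in Ioi x, exp (-γ ξ) := by
  have hqpos : ∀ ξ ≥ x, 0 < q ξ := fun ξ hξ => by linarith [hq ξ hξ]
  have hh : ∀ ξ ∈ Ici x, HasDerivAt (fun t => (q t)⁻¹) (-deriv q ξ / q ξ ^ 2) ξ :=
    fun ξ hξ => (hqd ξ).hasDerivAt.inv (hqpos ξ hξ).ne'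
  have hsimp : ∀ ξ ∈ Ioi x, 2 * q ξ * (q ξ)⁻¹ - -deriv q ξ / q ξ ^ 2 = 2 + deriv q ξ / q ξ ^ 2 :=
    fun ξ hξ => by field_simp [(hqpos ξ (le_of_lt hξ)).ne']; ring
  have hnonneg : ∀ ξ ∈ Ioi x, 0 ≤ 2 * q ξ * (q ξ)⁻¹ - -deriv q ξ / q ξ ^ 2 := fun ξ hξ => by
    have h1 : |deriv q ξ / q ξ ^ 2| ≤ C / q ξ := by
      simpa using abs_deriv_div_pow_le hq' hqpos 0 (le_of_lt hξ)
    have h2 : C / q ξ ≤ 1 := by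
      rw [div_le_one (hqpos ξ (le_of_lt hξ))]; linarith [hq ξ (le_of_lt hξ)]
    rw [hsimp ξ hξ]
    linarith [neg_abs_le (deriv q ξ / q ξ ^ 2)]
  have hlim : Tendsto (fun ξ => (q ξ)⁻¹ * exp (-γ ξ)) atTop (𝓝 0) := by
    simpa using hqtop.inv_tendsto_atTop.mul (tendsto_exp_neg hγ hqtop)
  have hint := integrableOn_Ioi_mul_exp_neg_of_nonneg hγ hh hnonneg hlim
  have hI := integral_Ioi_mul_exp_neg_of_nonneg hγ hh hnonneg hlim
  rw [setIntegral_congr_fun measurableSet_Ioi (g := fun ξ =>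
      (2 * q ξ * (q ξ)⁻¹ - -deriv q ξ / q ξ ^ 2) * exp (-γ ξ) - 2 * exp (-γ ξ))
      (fun ξ hξ => by simp only; rw [hsimp ξ hξ]; ring),
    integral_sub hint ((integrableOn_exp_neg hγ hqtop x).const_mul 2), hI, integral_const_mul,
    div_eq_inv_mul]

theorem abs_integral_Ioi_deriv_div_sq_mul_exp_neg_le (hqd : Differentiable ℝ q)
    (hγ : ∀ y, HasDerivAt γ (2 * q y) y) (hqtop : Tendsto q atTop atTop)
    (hq : ∀ ξ ≥ x, 2 * C ≤ q ξ) (hq' : ∀ ξ ≥ x, |deriv q ξ| ≤ C * q ξ) (hC : 0 < C) :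
    |∫ ξ in Ioi x, deriv q ξ / q ξ ^ 2 * exp (-γ ξ)| ≤ C * (exp (-γ x) / q x ^ 2) := by
  have hqpos : ∀ ξ ≥ x, 0 < q ξ := fun ξ hξ => by linarith [hq ξ hξ]
  have hh : ∀ ξ ∈ Ici x, HasDerivAt (fun t => (q t)⁻¹ ^ 2) (-2 * deriv q ξ / q ξ ^ 3) ξ :=
    fun ξ hξ => (((hqd ξ).hasDerivAt.inv (hqpos ξ hξ).ne').fun_pow 2).congr_deriv <| by
      simp only [Nat.cast_ofNat, Nat.add_one_sub_one, pow_one, Pi.inv_apply]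
      field_simp
  have hcoef : ∀ ξ ∈ Ioi x, (q ξ)⁻¹ ≤ 2 * q ξ * (q ξ)⁻¹ ^ 2 - -2 * deriv q ξ / q ξ ^ 3 := by
    intro ξ hξ
    have hξ' : ξ ≥ x := le_of_lt hξ
    have hqξ := hqpos ξ hξ'
    have h1 : |deriv q ξ / q ξ ^ 3| ≤ C / q ξ ^ 2 := abs_deriv_div_pow_le hq' hqpos 1 hξ'
    have h2 : C / q ξ ^ 2 ≤ (q ξ)⁻¹ / 2 := by
      rw [div_le_div_iff₀ (by positivity) two_pos]
      field_simp
      nlinarith [mul_le_mul_of_nonneg_left (hq ξ hξ') hqξ.le]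
    have h3 : 2 * q ξ * (q ξ)⁻¹ ^ 2 - -2 * deriv q ξ / q ξ ^ 3 =
        2 * (q ξ)⁻¹ + 2 * (deriv q ξ / q ξ ^ 3) := by
      field_simp
      ring
    rw [h3]
    linarith [neg_abs_le (deriv q ξ / q ξ ^ 3)]
  have hnonneg : ∀ ξ ∈ Ioi x, 0 ≤ 2 * q ξ * (q ξ)⁻¹ ^ 2 - -2 * deriv q ξ / q ξ ^ 3 :=
    fun ξ hξ => (inv_pos.2 (hqpos ξ (le_of_lt hξ))).le.trans (hcoef ξ hξ)
  have hlim : Tendsto (fun ξ => (q ξ)⁻¹ ^ 2 * exp (-γ ξ)) atTop (𝓝 0) := by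
    simpa using (hqtop.inv_tendsto_atTop.pow 2).mul (tendsto_exp_neg hγ hqtop)
  have hpointwise : ∀ ξ ∈ Ioi x, ‖deriv q ξ / q ξ ^ 2 * exp (-γ ξ)‖ ≤
      C * ((2 * q ξ * (q ξ)⁻¹ ^ 2 - -2 * deriv q ξ / q ξ ^ 3) * exp (-γ ξ)) := by
    intro ξ hξ
    have h1 : |deriv q ξ / q ξ ^ 2| ≤ C / q ξ := by
      simpa using abs_deriv_div_pow_le hq' hqpos 0 (le_of_lt hξ)
    rw [norm_mul, norm_of_nonneg (exp_pos _).le, Real.norm_eq_abs, ← mul_assoc]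
    gcongr
    calc |deriv q ξ / q ξ ^ 2| ≤ C * (q ξ)⁻¹ := h1
      _ ≤ _ := by gcongr; exact hcoef ξ hξ
  calc |∫ ξ in Ioi x, deriv q ξ / q ξ ^ 2 * exp (-γ ξ)|
      ≤ ∫ ξ in Ioi x, C * ((2 * q ξ * (q ξ)⁻¹ ^ 2 - -2 * deriv q ξ / q ξ ^ 3) * exp (-γ ξ)) :=
        norm_integral_le_of_norm_le
          ((integrableOn_Ioi_mul_exp_neg_of_nonneg hγ hh hnonneg hlim).const_mul C)
          (ae_restrict_of_forall_mem measurableSet_Ioi hpointwise)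
    _ = C * (exp (-γ x) / q x ^ 2) := by
        rw [integral_const_mul, integral_Ioi_mul_exp_neg_of_nonneg hγ hh hnonneg hlim]
        field_simp

theorem neg_two_mul_exp_mul_integral_Ioi_eq (hqd : Differentiable ℝ q)
    (hγ : ∀ y, HasDerivAt γ (2 * q y) y) (hqtop : Tendsto q atTop atTop)
    (hq : ∀ ξ ≥ x, 2 * C ≤ q ξ) (hq' : ∀ ξ ≥ x, |deriv q ξ| ≤ C * q ξ) (hC : 0 < C) :
    -2 * exp (γ x) * ∫ ξ in Ioi x, exp (-γ ξ) =
      -(1 / q x) + exp (γ x) * ∫ ξ in Ioi x, deriv q ξ / q ξ ^ 2 * exp (-γ ξ) := by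
  rw [integral_Ioi_deriv_div_sq_mul_exp_neg hqd hγ hqtop hq hq' hC, mul_sub, ← mul_div_assoc,
    ← exp_add, add_neg_cancel, exp_zero]
  ring

theorem abs_two_mul_mul_add_two_le (hqd : Differentiable ℝ q)
    (hγ : ∀ y, HasDerivAt γ (2 * q y) y) (hqtop : Tendsto q atTop atTop)
    (hq : ∀ ξ ≥ x, 2 * C ≤ q ξ) (hq' : ∀ ξ ≥ x, |deriv q ξ| ≤ C * q ξ) (hC : 0 < C) :
    |2 * q x * (-2 * exp (γ x) * ∫ ξ in Ioi x, exp (-γ ξ)) + 2| ≤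
      4 * C * |-2 * exp (γ x) * ∫ ξ in Ioi x, exp (-γ ξ)| := by
  set F := ∫ ξ in Ioi x, exp (-γ ξ)
  set R := ∫ ξ in Ioi x, deriv q ξ / q ξ ^ 2 * exp (-γ ξ)
  have hRF : R = exp (-γ x) / q x - 2 * F :=
    integral_Ioi_deriv_div_sq_mul_exp_neg hqd hγ hqtop hq hq' hC
  have hR : |R| ≤ C * (exp (-γ x) / q x ^ 2) :=
    abs_integral_Ioi_deriv_div_sq_mul_exp_neg_le hqd hγ hqtop hq hq' hC
  have hqx : 2 * C ≤ q x := hq x le_rfl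
  have hqpos : 0 < q x := by linarith
  have hexp : exp (γ x) * exp (-γ x) = 1 := by rw [← exp_add, add_neg_cancel, exp_zero]
  have hCR : C * (exp (-γ x) / q x ^ 2) ≤ exp (-γ x) / (2 * q x) := by
    rw [mul_div_assoc', div_le_div_iff₀ (by positivity) (by positivity)]
    have := exp_pos (-γ x)
    nlinarith [mul_le_mul_of_nonneg_left hqx (by positivity : 0 ≤ exp (-γ x) * q x)]
  have hF : exp (-γ x) / (4 * q x) ≤ F := by
    have : exp (-γ x) / q x - exp (-γ x) / (2 * q x) = 2 * (exp (-γ x) / (4 * q x)) := by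
      field_simp; ring
    linarith [le_abs_self R]
  have hFpos : 0 < F := (by positivity : 0 < exp (-γ x) / (4 * q x)).trans_le hF
  calc |2 * q x * (-2 * exp (γ x) * F) + 2| = 2 * q x * exp (γ x) * |R| := by
        rw [show 2 * q x * (-2 * exp (γ x) * F) + 2 = 2 * q x * exp (γ x) * R by
          rw [hRF]; field_simp; linear_combination -hexp]
        rw [abs_mul, abs_of_pos (by positivity)]
    _ ≤ 2 * q x * exp (γ x) * (C * (exp (-γ x) / q x ^ 2)) := by gcongr
    _ = 4 * C * (2 * exp (γ x) * (exp (-γ x) / (4 * q x))) := by field_simp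
    _ ≤ 4 * C * (2 * exp (γ x) * F) := by gcongr
    _ = 4 * C * |-2 * exp (γ x) * F| := by
        rw [show -2 * exp (γ x) * F = -(2 * exp (γ x) * F) by ring, abs_neg,
          abs_of_pos (by positivity)]

end Regime

theorem m_prime_identity_and_ratio_bounded_general
    (q γ : ℝ → ℝ)
    (hq : ContDiff ℝ 1 q)
    (hγ : ∀ y, γ y = 2 * ∫ t in (0:ℝ)..y, q t)
    (hqtop : Tendsto q atTop atTop)
    (hq' : ∃ C : ℝ, ∀ᶠ x in atTop, |deriv q x| / q x ≤ C) :
    (∀ᶠ x in atTop,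
        (-2 * Real.exp (γ x) * ∫ ξ in Set.Ioi x, Real.exp (-(γ ξ))) =
          -(1 / q x) +
            Real.exp (γ x) *
              ∫ ξ in Set.Ioi x, deriv q ξ / q ξ ^ 2 * Real.exp (-(γ ξ))) ∧
      ∃ G > (0:ℝ), ∀ x ≥ (0:ℝ),
        |deriv (fun x => -2 * Real.exp (γ x) * ∫ ξ in Set.Ioi x, Real.exp (-(γ ξ))) x| ≤
          G * |(-2 * Real.exp (γ x) * ∫ ξ in Set.Ioi x, Real.exp (-(γ ξ)))| := by
  have hqd : Differentiable ℝ q := hq.differentiable one_ne_zero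
  have hγ' : ∀ y, HasDerivAt γ (2 * q y) y := fun y => by
    rw [show γ = fun y => 2 * ∫ t in (0:ℝ)..y, q t from funext hγ]
    exact (intervalIntegral.integral_hasDerivAt_right (hq.continuous.intervalIntegrable 0 y)
      (hq.continuous.stronglyMeasurableAtFilter _ _) hq.continuous.continuousAt).const_mul 2
  obtain ⟨C, hC, hregime⟩ := exists_pos_eventually_two_mul_le_and_abs_deriv_le hqtop hq'
  obtain ⟨x₁, hx₁⟩ := eventually_atTop.1 hregime
  have hq₁ : ∀ x ≥ x₁, ∀ ξ ≥ x, 2 * C ≤ q ξ := fun x hx ξ hξ => (hx₁ ξ (hx.trans hξ)).1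
  have hq'₁ : ∀ x ≥ x₁, ∀ ξ ≥ x, |deriv q ξ| ≤ C * q ξ := fun x hx ξ hξ =>
    (hx₁ ξ (hx.trans hξ)).2
  have hM := hasDerivAt_neg_two_mul_exp_mul_integral_Ioi hγ' hqtop
  have hMc : Continuous fun x => -2 * exp (γ x) * ∫ ξ in Ioi x, exp (-γ ξ) :=
    continuous_iff_continuousAt.2 fun x => (hM x).continuousAt
  refine ⟨eventually_atTop.2 ⟨x₁, fun x hx =>
    neg_two_mul_exp_mul_integral_Ioi_eq hqd hγ' hqtop (hq₁ x hx) (hq'₁ x hx) hC⟩, ?_⟩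
  simp only [fun x => (hM x).deriv]
  exact exists_pos_forall_ge_abs_le_mul_abs
    ((continuous_const.mul hq.continuous).mul hMc |>.add continuous_const) hMc
    (fun x => mul_ne_zero (by simp [exp_ne_zero]) (integral_Ioi_exp_neg_pos hγ' hqtop x).ne')
    (eventually_atTop.2 ⟨x₁, fun x hx =>
      abs_two_mul_mul_add_two_le hqd hγ' hqtop (hq₁ x hx) (hq'₁ x hx) hC⟩) 0

/-- Under H1, q → ∞ and limsup |q'|/q < ∞: the integration-by-parts identity for
m'(x) = -2e^{γ(x)}∫_x^∞ e^{-γ} holds for large x, and |m''|/|m'| ≤ G on [0,∞). -/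
theorem m_prime_identity_and_ratio_bounded
    (q γ : ℝ → ℝ)
    (hq : ContDiff ℝ 1 q)
    (hγ : ∀ y, γ y = 2 * ∫ t in (0:ℝ)..y, q t)
    (H1 : ∫⁻ y in Set.Ioi (0:ℝ),
        ENNReal.ofReal (Real.exp (γ y)) *
          ∫⁻ z in Set.Ioi y, ENNReal.ofReal (Real.exp (-(γ z))) < ⊤)
    (hqtop : Tendsto q atTop atTop)
    (hq' : ∃ C : ℝ, ∀ᶠ x in atTop, |deriv q x| / q x ≤ C) :
    (∀ᶠ x in atTop,
        (-2 * Real.exp (γ x) * ∫ ξ in Set.Ioi x, Real.exp (-(γ ξ))) =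
          -(1 / q x) +
            Real.exp (γ x) *
              ∫ ξ in Set.Ioi x, deriv q ξ / q ξ ^ 2 * Real.exp (-(γ ξ))) ∧
      ∃ G > (0:ℝ), ∀ x ≥ (0:ℝ),
        |deriv (fun x => -2 * Real.exp (γ x) * ∫ ξ in Set.Ioi x, Real.exp (-(γ ξ))) x| ≤
          G * |(-2 * Real.exp (γ x) * ∫ ξ in Set.Ioi x, Real.exp (-(γ ξ)))| :=
  m_prime_identity_and_ratio_bounded_general q γ hq hγ hqtop hq'
end
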